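/- Let p ≥ 2 and n = 3p−1, and for i ∈ ℤ let ī denote the unique element of [n] with ī ≡ i (mod n). Let Σ = ⟨{ {ī, (i+1)¯, (i+2)¯} : i=1,…,n }⟩, and for i=1,…,n and j=1,…,p−2 let Δ(i,j) = ⟨{ī, (i+1)¯, (i+2+3j)¯}, {(i+1+3j)¯, (i+2+3j)¯, (i+1)¯}⟩, and let L = {Δ(i,j) : i=1,…,n, j=1,…,p−2}. Then for any subset M ⊆ L, the complex Σ ∪ (⋃_{Δ(i,j)∈M} Δ(i,j)) is Buchsbaum and link-acyclic. -/

import Mathlib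

open Finset

noncomputable section

/-- `Δ` is a simplicial complex on `[n] = {1,…,n}`: a collection of subsets of `[n]`,
closed under taking subsets, containing every singleton `{i}` for `i ∈ [n]`. -/
def IsComplexOn (n : ℕ) (Δ : Finset (Finset ℕ)) : Prop :=
  (∀ F ∈ Δ, ∀ G ⊆ F, G ∈ Δ) ∧
  (∀ F ∈ Δ, ∀ i ∈ F, i ∈ Finset.Icc 1 n) ∧
  (∀ i ∈ Finset.Icc 1 n, ({i} : Finset ℕ) ∈ Δ)

/-- a simplicial complex whose vertex set is contained in `[n]`:
a downward closed collection of subsets of `[n]`. -/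
def IsComplexIn (n : ℕ) (Δ : Finset (Finset ℕ)) : Prop :=
  (∀ F ∈ Δ, ∀ G ⊆ F, G ∈ Δ) ∧ (∀ F ∈ Δ, ∀ i ∈ F, i ∈ Finset.Icc 1 n)

/-- the faces of `Δ` with `m` vertices -/
def facesOf (Δ : Finset (Finset ℕ)) (m : ℕ) : Finset (Finset ℕ) :=
  Δ.filter fun F => F.card = m

/-- `fVec Δ j = f_{j-1}(Δ)`, the number of faces of `Δ` with `j` vertices;
by convention `f_{-1}(Δ) = 1`. -/
def fVec (Δ : Finset (Finset ℕ)) (j : ℕ) : ℤ :=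
  if j = 0 then 1 else ((facesOf Δ j).card : ℤ)

/-- the `h`-vector of a `(d-1)`-dimensional complex, defined by
`∑ f_{i-1} (x-1)^{d-i} = ∑ h_i x^{d-i}`, i.e.
`h_i = ∑_{j=0}^{i} (-1)^{i-j} C(d-j, i-j) f_{j-1}`. -/
def hVec (d : ℕ) (Δ : Finset (Finset ℕ)) (i : ℕ) : ℤ :=
  ∑ j ∈ Finset.range (i + 1),
    (-1 : ℤ) ^ (i - j) * ((d - j).choose (i - j) : ℤ) * fVec Δ j

/-- the dimension `max {k : f_k(Δ) ≠ 0}` of `Δ`, as an integer -/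
def dimZ (Δ : Finset (Finset ℕ)) : ℤ := ((Δ.sup Finset.card : ℕ) : ℤ) - 1

/-- the link `lk_Δ(F) = {G : G ∩ F = ∅, G ∪ F ∈ Δ}` -/
def link (Δ : Finset (Finset ℕ)) (F : Finset ℕ) : Finset (Finset ℕ) :=
  Δ.filter fun G => Disjoint G F ∧ G ∪ F ∈ Δ

variable (K : Type) [Field K]

/-- the simplicial boundary operator on formal `K`-linear combinations of
finite subsets of `ℕ` (vertices ordered by the order on `ℕ`):
`∂ F = ∑_{v ∈ F} (-1)^{#{u ∈ F : u < v}} (F \ {v})`. -/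
def bdry : (Finset ℕ →₀ K) →ₗ[K] (Finset ℕ →₀ K) :=
  Finsupp.lsum K fun F => LinearMap.toSpanSingleton K (Finset ℕ →₀ K)
    (∑ v ∈ F, ((-1 : K) ^ ((F.filter fun u => u < v).card)) • Finsupp.single (F.erase v) (1 : K))

/-- the space of simplicial `K`-chains of `Δ` spanned by the faces with `m` vertices
(for `m = 0` this is the span of the empty face, giving *reduced* homology) -/
def chains (Δ : Finset (Finset ℕ)) (m : ℕ) : Submodule K (Finset ℕ →₀ K) :=
  Submodule.span K ((fun F => Finsupp.single F (1 : K)) '' (facesOf Δ m : Set (Finset ℕ)))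

/-- the dimension of the reduced homology of `Δ` at faces of cardinality `m`:
`dim (ker ∂ ∩ C_m) - dim (∂ C_{m+1})` -/
def homDim (Δ : Finset (Finset ℕ)) (m : ℕ) : ℕ :=
  Module.finrank K ↥(chains K Δ m ⊓ LinearMap.ker (bdry K))
    - Module.finrank K ↥((chains K Δ (m + 1)).map (bdry K))

/-- the reduced Betti number `β_i(Δ; K) = dim_K H̃_i(Δ; K)` for `i : ℤ` -/
def betti (Δ : Finset (Finset ℕ)) (i : ℤ) : ℕ :=
  if 0 ≤ i + 1 then homDim K Δ (i + 1).toNat else 0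

/-- all facets (maximal faces) of `Δ` have the same cardinality -/
def IsPure (Δ : Finset (Finset ℕ)) : Prop :=
  ∀ F ∈ Δ, (∀ G ∈ Δ, F ⊆ G → F = G) → F.card = Δ.sup Finset.card

/-- `Δ` is Cohen–Macaulay (over `K`): for every face `F ∈ Δ` (including `∅`),
`β_i(lk_Δ(F)) = 0` for all `i ≠ dim Δ - |F|`. -/
def IsCohenMacaulay (Δ : Finset (Finset ℕ)) : Prop :=
  ∀ F ∈ Δ, ∀ i : ℤ, i ≠ dimZ Δ - F.card → betti K (link Δ F) i = 0

/-- `Δ` is Buchsbaum (over `K`): `Δ` is pure and the link of every vertex is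
Cohen–Macaulay. -/
def IsBuchsbaum (Δ : Finset (Finset ℕ)) : Prop :=
  IsPure Δ ∧ ∀ v : ℕ, ({v} : Finset ℕ) ∈ Δ → IsCohenMacaulay K (link Δ {v})

/-- `Δ` is connected: any two vertices are joined by a path of edges of `Δ` -/
def IsConnectedComplex (Δ : Finset (Finset ℕ)) : Prop :=
  ∀ u v : ℕ, ({u} : Finset ℕ) ∈ Δ → ({v} : Finset ℕ) ∈ Δ →
    Relation.ReflTransGen (fun a b : ℕ => a ≠ b ∧ ({a, b} : Finset ℕ) ∈ Δ) u v

/-- `Δ` is link-acyclic: `β_i(lk_Δ(v)) = 0` for every vertex `v` of `Δ` and every `i` -/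
def IsLinkAcyclic (Δ : Finset (Finset ℕ)) : Prop :=
  ∀ v : ℕ, ({v} : Finset ℕ) ∈ Δ → ∀ i : ℤ, betti K (link Δ {v}) i = 0

/-- `Δ` is `2`-dimensional with `h`-vector `(a, b, c, e)` -/
def hVector3 (Δ : Finset (Finset ℕ)) (a b c e : ℤ) : Prop :=
  hVec 3 Δ 0 = a ∧ hVec 3 Δ 1 = b ∧ hVec 3 Δ 2 = c ∧ hVec 3 Δ 3 = e

/-- `macaulay2 a = a^⟨2⟩`: if `a = C(b,2) + r` is the (greedy) `2`-nd Macaulay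
representation (`b` maximal with `C(b,2) ≤ a`, `0 ≤ r < b`, `r = C(r,1)`), then
`a^⟨2⟩ = C(b+1,3) + C(r+1,2)`, and `0^⟨2⟩ = 0`. -/
def macaulay2 (a : ℕ) : ℕ :=
  if a = 0 then 0
  else
    (Nat.findGreatest (fun t => t.choose 2 ≤ a) (a + 2) + 1).choose 3
      + (a - (Nat.findGreatest (fun t => t.choose 2 ≤ a) (a + 2)).choose 2 + 1).choose 2

/-- `modRep n i = ī`, the unique element of `[n] = {1,…,n}` congruent to `i` mod `n` -/
def modRep (n : ℕ) (i : ℤ) : ℕ := ((i - 1) % (n : ℤ)).toNat + 1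


/-- `Σ` for `n = 3p-1`: generated by `{ī, (i+1)¯, (i+2)¯}`, `i = 1,…,n` -/
def SigmaA (p : ℕ) : Finset (Finset ℕ) :=
  (Finset.Icc 1 (3 * p - 1)).biUnion fun i =>
    ({modRep (3 * p - 1) (i : ℤ), modRep (3 * p - 1) ((i : ℤ) + 1),
      modRep (3 * p - 1) ((i : ℤ) + 2)} : Finset ℕ).powerset

/-- `Δ(i,j)` for `n = 3p-1`: generated by `{ī, (i+1)¯, (i+2+3j)¯}` and
`{(i+1+3j)¯, (i+2+3j)¯, (i+1)¯}` -/
def DeltaA (p i j : ℕ) : Finset (Finset ℕ) :=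
  ({modRep (3 * p - 1) (i : ℤ), modRep (3 * p - 1) ((i : ℤ) + 1),
    modRep (3 * p - 1) ((i : ℤ) + 2 + 3 * (j : ℤ))} : Finset ℕ).powerset ∪
  ({modRep (3 * p - 1) ((i : ℤ) + 1 + 3 * (j : ℤ)),
    modRep (3 * p - 1) ((i : ℤ) + 2 + 3 * (j : ℤ)),
    modRep (3 * p - 1) ((i : ℤ) + 1)} : Finset ℕ).powerset

end

/-!
Every face lies in a triangle, so the complex is pure. Read the vertices in `ZMod (3p - 1)`. The
triangles through a vertex `v` make its link a tree rooted at `v - 1`: the parent of `v + k`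
(`0 < k < 3p - 1`) is `v + k + 1`, `v - 1` or `v + 1` according as `k ≡ 0, 1, 2 (mod 3)`, and
since `3p - 1 ≡ 2 (mod 3)` every vertex reaches the root in at most two steps. The map sending a
vertex to its path to the root is a chain contraction of a tree, so the link is acyclic; the
link of a vertex in it is a nonempty discrete set and the link of an edge is `{∅}`, so the link is
Cohen–Macaulay as well.
-/

open Finsupp

section Homology

variable {K : Type} [Field K]

lemma bdry_single (F : Finset ℕ) :
    bdry K (single F 1) =
      ∑ v ∈ F, (-1 : K) ^ #{u ∈ F | u < v} • single (F.erase v) (1 : K) := by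
  simp [bdry]

lemma bdry_single_empty : bdry K (single (∅ : Finset ℕ) 1) = 0 := by
  simp [bdry_single]

lemma bdry_single_singleton (u : ℕ) : bdry K (single {u} 1) = single (∅ : Finset ℕ) (1 : K) := by
  simp [bdry_single, filter_singleton]

lemma bdry_single_pair {a b : ℕ} (h : a < b) :
    bdry K (single {a, b} 1) = single {b} (1 : K) - single {a} 1 := by
  have hab : a ∉ ({b} : Finset ℕ) := by simp [h.ne]
  have hlt : #{u ∈ ({a, b} : Finset ℕ) | u < a} = 0 := by
    simp only [card_eq_zero, filter_eq_empty_iff, mem_insert, mem_singleton]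
    omega
  have hlt' : ({u ∈ ({a, b} : Finset ℕ) | u < b}) = {a} := by
    ext x
    simp only [mem_filter, mem_insert, mem_singleton]
    omega
  rw [bdry_single, sum_insert hab, sum_singleton, hlt, hlt', erase_insert hab,
    pair_comm, erase_insert (by simp [h.ne'])]
  simp only [pow_zero, card_singleton, pow_one, one_smul, neg_one_smul]
  abel

variable (K) in
-- The sign makes `∂ = {a} - {b}` whatever the order of `a` and `b`.
noncomputable def orientedEdge (a b : ℕ) : Finset ℕ →₀ K :=
  (if a < b then (-1 : K) else 1) • single {a, b} 1

lemma bdry_orientedEdge {a b : ℕ} (h : a ≠ b) :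
    bdry K (orientedEdge K a b) = single {a} 1 - single {b} 1 := by
  rcases h.lt_or_gt with hab | hba
  · simp [orientedEdge, hab, bdry_single_pair hab]
  · rw [orientedEdge, if_neg hba.not_gt, one_smul, pair_comm, bdry_single_pair hba]

lemma single_pair_eq_smul_orientedEdge (a b : ℕ) :
    single {a, b} (1 : K) = (if a < b then (-1 : K) else 1) • orientedEdge K a b := by
  split_ifs <;> simp [orientedEdge, *]

lemma single_mem_chains {Γ : Finset (Finset ℕ)} {F : Finset ℕ} {m : ℕ} (hF : F ∈ Γ)
    (hc : F.card = m) : single F (1 : K) ∈ chains K Γ m :=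
  Submodule.subset_span ⟨F, by simp [facesOf, hF, hc], rfl⟩

lemma orientedEdge_mem_chains {Γ : Finset (Finset ℕ)} {a b : ℕ} (hab : a ≠ b)
    (h : {a, b} ∈ Γ) : orientedEdge K a b ∈ chains K Γ 2 := by
  unfold orientedEdge
  exact Submodule.smul_mem _ _ (single_mem_chains (K := K) h (card_pair hab))

instance (Γ : Finset (Finset ℕ)) (m : ℕ) : FiniteDimensional K (chains K Γ m) :=
  FiniteDimensional.span_of_finite K ((facesOf Γ m).finite_toSet.image _)

lemma homDim_eq_zero_of_homotopy {Γ : Finset (Finset ℕ)} {m : ℕ}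
    (h : (Finset ℕ →₀ K) →ₗ[K] (Finset ℕ →₀ K))
    (hmem : ∀ F ∈ facesOf Γ m, h (single F 1) ∈ chains K Γ (m + 1))
    (hid : ∀ F ∈ facesOf Γ m, bdry K (h (single F 1)) + h (bdry K (single F 1)) = single F 1) :
    homDim K Γ m = 0 := by
  have hchains : chains K Γ m ≤ (chains K Γ (m + 1)).comap h ⊓
      LinearMap.ker (bdry K ∘ₗ h + h ∘ₗ bdry K - LinearMap.id) := by
    refine Submodule.span_le.2 ?_
    rintro _ ⟨F, hF, rfl⟩
    simp [hmem F hF, hid F hF]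
  refine Nat.sub_eq_zero_of_le (Submodule.finrank_mono ?_)
  rintro z ⟨hz, hcycle⟩
  obtain ⟨hhz, hker⟩ := hchains hz
  refine ⟨h z, hhz, ?_⟩
  simpa [LinearMap.mem_ker.1 hcycle, sub_eq_zero] using hker

lemma homDim_eq_zero_of_forall_card_ne {Γ : Finset (Finset ℕ)} {m : ℕ}
    (h : ∀ F ∈ Γ, F.card ≠ m) : homDim K Γ m = 0 := by
  have : chains K Γ m = ⊥ := by
    rw [chains, show facesOf Γ m = ∅ from filter_eq_empty_iff.2 h]
    simp
  rw [homDim, this, bot_inf_eq, finrank_bot, zero_tsub]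

-- Coning off to the vertex `w` contracts the `(-1)`-chains.
lemma homDim_zero_eq_zero_of_singleton_mem {Γ : Finset (Finset ℕ)} {w : ℕ} (hw : {w} ∈ Γ) :
    homDim K Γ 0 = 0 := by
  refine homDim_eq_zero_of_homotopy (linearCombination K fun _ => single {w} 1) ?_ ?_ <;>
  · intro F hF
    obtain rfl : F = ∅ := card_eq_zero.1 (mem_filter.1 hF).2
    simp [bdry_single_empty, bdry_single_singleton,
      single_mem_chains (K := K) hw (card_singleton w)]

lemma betti_eq_zero_of_homDim {Γ : Finset (Finset ℕ)} {i : ℤ}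
    (h : homDim K Γ (i + 1).toNat = 0) : betti K Γ i = 0 := by
  simp [betti, h]

lemma betti_eq_zero_of_forall_card_ne {Γ : Finset (Finset ℕ)} {i : ℤ}
    (h : ∀ F ∈ Γ, (F.card : ℤ) ≠ i + 1) : betti K Γ i = 0 := by
  rw [betti]
  split_ifs with hi
  · exact homDim_eq_zero_of_forall_card_ne fun F hF hc => h F hF (by omega)
  · rfl

lemma betti_eq_zero_of_card_le_one {Γ : Finset (Finset ℕ)} {w : ℕ} (hw : {w} ∈ Γ)
    (hcard : ∀ F ∈ Γ, F.card ≤ 1) {i : ℤ} (hi : i ≠ 0) : betti K Γ i = 0 := by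
  rcases eq_or_ne i (-1) with rfl | hi'
  · exact betti_eq_zero_of_homDim (homDim_zero_eq_zero_of_singleton_mem hw)
  · exact betti_eq_zero_of_forall_card_ne fun F hF => by have := hcard F hF; omega

end Homology

section Link

lemma link_empty (Γ : Finset (Finset ℕ)) : link Γ ∅ = Γ :=
  filter_true_of_mem fun F hF => by simpa using hF

lemma mem_link {Γ : Finset (Finset ℕ)} {F G : Finset ℕ} :
    G ∈ link Γ F ↔ G ∈ Γ ∧ Disjoint G F ∧ G ∪ F ∈ Γ := by
  simp [link]

lemma card_add_card_le_of_mem_link {Γ : Finset (Finset ℕ)} {F G : Finset ℕ}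
    (hG : G ∈ link Γ F) : G.card + F.card ≤ Γ.sup card := by
  obtain ⟨-, hdisj, hunion⟩ := mem_link.1 hG
  rw [← card_union_of_disjoint hdisj]
  exact le_sup hunion

end Link

section RootedTree

variable {α β : Type*} [DecidableEq α] [DecidableEq β]

structure IsRootedTree (E : Finset (Finset α)) (r : α) (P : α → α) : Prop where
  exists_eq_pair : ∀ e ∈ E, ∃ u, u ≠ r ∧ e = {u, P u}
  pair_mem : ∀ e ∈ E, ∀ u ∈ e, u ≠ r → {u, P u} ∈ E
  exists_iterate_eq_root : ∃ N, ∀ u, P^[N] u = r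

namespace IsRootedTree

variable {E : Finset (Finset α)} {r : α} {P : α → α}

lemma parent_root (hT : IsRootedTree E r P) : P r = r := by
  obtain ⟨N, hN⟩ := hT.exists_iterate_eq_root
  calc P r = P (P^[N] r) := by rw [hN]
    _ = P^[N] (P r) := by rw [← Function.iterate_succ_apply' P N r, Function.iterate_succ_apply]
    _ = r := hN _

lemma parent_ne (hT : IsRootedTree E r P) {u : α} (hu : u ≠ r) : P u ≠ u := fun hfix => by
  obtain ⟨N, hN⟩ := hT.exists_iterate_eq_root
  exact hu (Function.iterate_fixed hfix N ▸ hN u)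

lemma exists_child_root (hT : IsRootedTree E r P) (hE : E.Nonempty) :
    ∃ u, u ≠ r ∧ P u = r ∧ {u, P u} ∈ E := by
  obtain ⟨e, he⟩ := hE
  obtain ⟨u, hur, rfl⟩ := hT.exists_eq_pair e he
  obtain ⟨N, hN⟩ := hT.exists_iterate_eq_root
  replace hN := hN u
  induction N generalizing u with
  | zero => exact absurd hN hur
  | succ N ih =>
    by_cases hPu : P u = r
    · exact ⟨u, hur, hPu, he⟩
    · exact ih (P u) hPu (hT.pair_mem _ he _ (by simp) hPu) hN

lemma image {f : α → β} {g : β → α} (hgf : Function.LeftInverse g f)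
    (hT : IsRootedTree E r P) : IsRootedTree (E.image (Finset.image f)) (f r) (f ∘ P ∘ g) where
  exists_eq_pair := by
    simp only [mem_image, forall_exists_index, and_imp, forall_apply_eq_imp_iff₂]
    intro e he
    obtain ⟨u, hur, rfl⟩ := hT.exists_eq_pair e he
    exact ⟨f u, hgf.injective.ne hur, by simp [image_insert, hgf u]⟩
  pair_mem := by
    simp only [mem_image, forall_exists_index, and_imp, forall_apply_eq_imp_iff₂]
    intro e he u hu hur
    exact ⟨{u, P u}, hT.pair_mem e he u hu (fun h => hur (h ▸ rfl)),
      by simp [image_insert, hgf u]⟩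
  exists_iterate_eq_root := by
    obtain ⟨N, hN⟩ := hT.exists_iterate_eq_root
    refine ⟨N + 1, fun u => ?_⟩
    have key : ∀ k x, (f ∘ P ∘ g)^[k + 1] x = f (P^[k + 1] (g x)) := by
      intro k
      induction k with
      | zero => simp
      | succ k ih =>
        intro x
        rw [Function.iterate_succ_apply', ih, Function.iterate_succ_apply' P (k + 1)]
        simp [hgf _]
    rw [key, Function.iterate_succ_apply', hN, hT.parent_root]

end IsRootedTree

end RootedTree

section Generated

variable {α β : Type*} [DecidableEq α] [DecidableEq β]

def linkEdges (𝒯 : Finset (Finset α)) (v : α) : Finset (Finset α) :=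
  {T ∈ 𝒯 | v ∈ T}.image fun T => T.erase v

lemma linkEdges_image {f : α → β} (hf : Function.Injective f) (𝒯 : Finset (Finset α)) (v : α) :
    linkEdges (𝒯.image (image f)) (f v) = (linkEdges 𝒯 v).image (image f) := by
  ext e
  simp [linkEdges, hf.mem_finset_image, image_erase hf]

lemma link_biUnion_powerset_singleton (𝒯 : Finset (Finset ℕ)) (v : ℕ) :
    link (𝒯.biUnion powerset) {v} = (linkEdges 𝒯 v).biUnion powerset := by
  ext G
  simp only [linkEdges, mem_link, mem_biUnion, mem_powerset, mem_image, mem_filter,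
    disjoint_singleton_right, union_singleton, insert_subset_iff]
  constructor
  · rintro ⟨-, hvG, T, hT, hvT, hGT⟩
    exact ⟨_, ⟨T, ⟨hT, hvT⟩, rfl⟩, subset_erase.2 ⟨hGT, hvG⟩⟩
  · rintro ⟨_, ⟨T, ⟨hT, hvT⟩, rfl⟩, hGT⟩
    obtain ⟨hGT, hvG⟩ := subset_erase.1 hGT
    exact ⟨⟨T, hT, hGT⟩, hvG, T, hT, hvT, hGT⟩

lemma mem_biUnion_powerset_of_subset {𝒯 : Finset (Finset α)} {F G : Finset α}
    (hF : F ∈ 𝒯.biUnion powerset) (hGF : G ⊆ F) : G ∈ 𝒯.biUnion powerset := by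
  obtain ⟨T, hT, hFT⟩ := mem_biUnion.1 hF
  exact mem_biUnion.2 ⟨T, hT, mem_powerset.2 (hGF.trans (mem_powerset.1 hFT))⟩

lemma isPure_biUnion_powerset {𝒯 : Finset (Finset ℕ)} {d : ℕ} (hcard : ∀ T ∈ 𝒯, T.card = d) :
    IsPure (𝒯.biUnion powerset) := by
  intro F hF hmax
  obtain ⟨T, hT, hFT⟩ := mem_biUnion.1 hF
  have hTΓ : T ∈ 𝒯.biUnion powerset := mem_biUnion.2 ⟨T, hT, mem_powerset_self T⟩
  rw [hmax T hTΓ (mem_powerset.1 hFT), hcard T hT]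
  refine le_antisymm (le_sup_of_le hTΓ (hcard T hT).ge) (Finset.sup_le fun G hG => ?_)
  obtain ⟨T', hT', hGT'⟩ := mem_biUnion.1 hG
  exact hcard T' hT' ▸ card_le_card (mem_powerset.1 hGT')

end Generated

section TreeHomology

variable {K : Type} [Field K] {E : Finset (Finset ℕ)} {r : ℕ} {P : ℕ → ℕ}

lemma IsRootedTree.eq_empty_or_singleton_or_edge (hT : IsRootedTree E r P) {F : Finset ℕ}
    (hF : F ∈ E.biUnion powerset) :
    F = ∅ ∨ (∃ u, F = {u} ∧ (u = r ∨ {u, P u} ∈ E)) ∨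
      ∃ u, u ≠ r ∧ F = {u, P u} ∧ {u, P u} ∈ E := by
  obtain ⟨e, he, hFe⟩ := mem_biUnion.1 hF
  obtain ⟨u, hur, rfl⟩ := hT.exists_eq_pair e he
  rw [mem_powerset, ← coe_subset, coe_pair, Set.subset_pair_iff_eq, coe_eq_empty,
    coe_eq_singleton, coe_eq_singleton, coe_eq_pair] at hFe
  rcases hFe with rfl | rfl | rfl | rfl
  · exact Or.inl rfl
  · exact Or.inr (Or.inl ⟨u, rfl, Or.inr he⟩)
  · refine Or.inr (Or.inl ⟨P u, rfl, ?_⟩)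
    by_cases hPu : P u = r
    · exact Or.inl hPu
    · exact Or.inr (hT.pair_mem _ he _ (by simp) hPu)
  · exact Or.inr (Or.inr ⟨u, hur, rfl, he⟩)

variable (K) in
noncomputable def rootPath (r : ℕ) (P : ℕ → ℕ) : ℕ → ℕ → (Finset ℕ →₀ K)
  | 0, _ => 0
  | k + 1, u => if u = r then 0 else orientedEdge K u (P u) + rootPath r P k (P u)

lemma bdry_rootPath (hT : IsRootedTree E r P) (k u : ℕ) :
    bdry K (rootPath K r P k u) = single {u} 1 - single {P^[k] u} 1 := by
  induction k generalizing u with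
  | zero => simp [rootPath]
  | succ k ih =>
    rw [rootPath, Function.iterate_succ_apply]
    split_ifs with hu
    · subst hu
      rw [hT.parent_root, Function.iterate_fixed hT.parent_root, sub_self, map_zero]
    · rw [map_add, bdry_orientedEdge (hT.parent_ne hu).symm, ih]
      abel

lemma rootPath_succ (k u : ℕ) : rootPath K r P (k + 1) u =
    if u = r then 0 else orientedEdge K u (P u) + rootPath K r P k (P u) := rfl

lemma rootPath_succ_of_iterate_eq {k w : ℕ} (hw : P^[k] w = r) :
    rootPath K r P (k + 1) w = rootPath K r P k w := by
  induction k generalizing w with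
  | zero => simp [rootPath, show w = r from hw]
  | succ k ih =>
    rw [Function.iterate_succ_apply] at hw
    rw [rootPath_succ (k + 1) w, rootPath_succ k w, ih hw]

lemma IsRootedTree.rootPath_mem_chains (hT : IsRootedTree E r P) (k : ℕ) {u : ℕ}
    (hu : u = r ∨ {u, P u} ∈ E) : rootPath K r P k u ∈ chains K (E.biUnion powerset) 2 := by
  induction k generalizing u with
  | zero => exact Submodule.zero_mem _
  | succ k ih =>
    rw [rootPath]
    split_ifs with hur
    · exact Submodule.zero_mem _
    · have he := hu.resolve_left hur
      refine Submodule.add_mem _ (orientedEdge_mem_chains (hT.parent_ne hur).symm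
        (mem_biUnion.2 ⟨_, he, mem_powerset_self _⟩)) (ih ?_)
      by_cases hPu : P u = r
      · exact Or.inl hPu
      · exact Or.inr (hT.pair_mem _ he _ (by simp) hPu)

variable (K) in
noncomputable def treeHomotopy (r : ℕ) (P : ℕ → ℕ) (N : ℕ) :
    (Finset ℕ →₀ K) →ₗ[K] (Finset ℕ →₀ K) :=
  linearCombination K fun F =>
    if F = ∅ then single {r} 1 else if F.card = 1 then ∑ u ∈ F, rootPath K r P N u else 0

lemma treeHomotopy_single_empty (N : ℕ) :
    treeHomotopy K r P N (single ∅ 1) = single {r} 1 := by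
  simp [treeHomotopy]

lemma treeHomotopy_single_singleton (N u : ℕ) :
    treeHomotopy K r P N (single {u} 1) = rootPath K r P N u := by
  simp [treeHomotopy]

lemma treeHomotopy_single_pair {N a b : ℕ} (hab : a ≠ b) :
    treeHomotopy K r P N (single {a, b} 1) = 0 := by
  simp [treeHomotopy, card_pair hab]

lemma IsRootedTree.treeHomotopy_bdry_orientedEdge (hT : IsRootedTree E r P) {N : ℕ}
    (hN : ∀ u, P^[N] u = r) {u : ℕ} (hur : u ≠ r) :
    treeHomotopy K r P N (bdry K (orientedEdge K u (P u))) = orientedEdge K u (P u) := by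
  obtain ⟨k, rfl⟩ : ∃ k, N = k + 1 :=
    Nat.exists_eq_add_one.2 (Nat.pos_of_ne_zero fun h => hur (by simpa [h] using hN u))
  have hPu : P^[k] (P u) = r := by rw [← Function.iterate_succ_apply, hN]
  rw [bdry_orientedEdge (hT.parent_ne hur).symm, map_sub, treeHomotopy_single_singleton,
    treeHomotopy_single_singleton, rootPath_succ_of_iterate_eq hPu, rootPath, if_neg hur]
  abel

lemma IsRootedTree.treeHomotopy_spec (hT : IsRootedTree E r P) (hE : E.Nonempty) {N : ℕ}
    (hN : ∀ u, P^[N] u = r) {F : Finset ℕ} (hF : F ∈ E.biUnion powerset) :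
    treeHomotopy K r P N (single F 1) ∈ chains K (E.biUnion powerset) (F.card + 1) ∧
      bdry K (treeHomotopy K r P N (single F 1)) + treeHomotopy K r P N (bdry K (single F 1)) =
        single F 1 := by
  rcases hT.eq_empty_or_singleton_or_edge hF with rfl | ⟨u, rfl, hu⟩ | ⟨u, hur, rfl, -⟩
  · obtain ⟨c, -, hPc, hc⟩ := hT.exists_child_root hE
    have hr : {r} ∈ E.biUnion powerset := mem_biUnion.2 ⟨_, hc, by simp [hPc]⟩
    simp [treeHomotopy_single_empty, bdry_single_singleton, bdry_single_empty,
      single_mem_chains (K := K) hr (card_singleton r)]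
  · simp [treeHomotopy_single_singleton, bdry_single_singleton, treeHomotopy_single_empty,
      bdry_rootPath hT, hN, hT.rootPath_mem_chains N hu]
  · have hne := (hT.parent_ne hur).symm
    rw [treeHomotopy_single_pair hne, map_zero, zero_add, single_pair_eq_smul_orientedEdge,
      map_smul, map_smul, hT.treeHomotopy_bdry_orientedEdge hN hur]
    exact ⟨Submodule.zero_mem _, rfl⟩

theorem IsRootedTree.homDim_eq_zero (hT : IsRootedTree E r P) (hE : E.Nonempty) (m : ℕ) :
    homDim K (E.biUnion powerset) m = 0 := by
  obtain ⟨N, hN⟩ := hT.exists_iterate_eq_root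
  refine homDim_eq_zero_of_homotopy (treeHomotopy K r P N) (fun F hF => ?_) (fun F hF => ?_) <;>
    obtain ⟨hFΓ, rfl⟩ := mem_filter.1 hF
  exacts [(hT.treeHomotopy_spec hE hN hFΓ).1, (hT.treeHomotopy_spec hE hN hFΓ).2]

theorem IsRootedTree.betti_eq_zero (hT : IsRootedTree E r P) (hE : E.Nonempty) (i : ℤ) :
    betti K (E.biUnion powerset) i = 0 :=
  betti_eq_zero_of_homDim (hT.homDim_eq_zero hE _)

lemma IsRootedTree.sup_card (hT : IsRootedTree E r P) (hE : E.Nonempty) :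
    (E.biUnion powerset).sup card = 2 := by
  have hcard : ∀ e ∈ E, e.card = 2 := fun e he => by
    obtain ⟨u, hur, rfl⟩ := hT.exists_eq_pair e he
    exact card_pair (hT.parent_ne hur).symm
  refine le_antisymm (Finset.sup_le fun F hF => ?_) ?_
  · obtain ⟨e, he, hFe⟩ := mem_biUnion.1 hF
    exact hcard e he ▸ card_le_card (mem_powerset.1 hFe)
  · obtain ⟨e, he⟩ := hE
    exact hcard e he ▸ le_sup (mem_biUnion.2 ⟨e, he, mem_powerset_self e⟩)

lemma IsRootedTree.exists_neighbor (hT : IsRootedTree E r P) (hE : E.Nonempty) {u : ℕ}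
    (hu : u = r ∨ {u, P u} ∈ E) : ∃ w, w ≠ u ∧ {w, u} ∈ E.biUnion powerset := by
  by_cases hur : u = r
  · obtain ⟨c, hcr, hPc, hc⟩ := hT.exists_child_root hE
    exact ⟨c, hur ▸ hcr, mem_biUnion.2 ⟨_, hc, by simp [hPc, hur]⟩⟩
  · exact ⟨P u, hT.parent_ne hur, mem_biUnion.2 ⟨_, hu.resolve_left hur, by simp [pair_comm]⟩⟩

theorem IsRootedTree.isCohenMacaulay (hT : IsRootedTree E r P) (hE : E.Nonempty) :
    IsCohenMacaulay K (E.biUnion powerset) := by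
  have hdim : dimZ (E.biUnion powerset) = 1 := by simp [dimZ, hT.sup_card hE]
  intro F hF i hi
  rw [hdim] at hi
  have hlink : ∀ G ∈ link (E.biUnion powerset) F, G.card + F.card ≤ 2 := fun G hG =>
    hT.sup_card hE ▸ card_add_card_le_of_mem_link hG
  rcases hT.eq_empty_or_singleton_or_edge hF with rfl | ⟨u, rfl, hu⟩ | ⟨u, hur, rfl, -⟩
  · rw [link_empty]
    exact hT.betti_eq_zero hE i
  · obtain ⟨w, hwu, hw⟩ := hT.exists_neighbor hE hu
    have hw' : {w} ∈ link (E.biUnion powerset) {u} :=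
      mem_link.2 ⟨mem_biUnion_powerset_of_subset hw (by simp), disjoint_singleton.2 hwu,
        by rwa [← insert_eq]⟩
    refine betti_eq_zero_of_card_le_one hw' (fun G hG => ?_) (by simpa using hi)
    have := hlink G hG
    rw [card_singleton] at this
    omega
  · rw [card_pair (hT.parent_ne hur).symm] at hi hlink
    refine betti_eq_zero_of_forall_card_ne fun G hG => ?_
    have := hlink G hG
    omega

end TreeHomology

section Offsets

variable {n : ℕ}

lemma natCast_eq_neg_of_add_eq {k m : ℕ} (h : k + m = n) : (k : ZMod n) = -(m : ZMod n) := by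
  have : ((k + m : ℕ) : ZMod n) = 0 := h ▸ ZMod.natCast_self n
  push_cast at this
  exact eq_neg_of_add_eq_zero_left this

lemma add_natCast_of_add_eq (v : ZMod n) {k m : ℕ} (h : k + m = n) :
    v + (k : ZMod n) = v - m := by
  rw [natCast_eq_neg_of_add_eq h, sub_eq_add_neg]

lemma self_ne_add_natCast (v : ZMod n) {k : ℕ} (hk0 : 0 < k) (hk : k < n) : v ≠ v + k := by
  rw [Ne, left_eq_add, ZMod.natCast_eq_zero_iff]
  exact Nat.not_dvd_of_pos_of_lt hk0 hk

lemma add_natCast_inj (v : ZMod n) {k m : ℕ} (hk : k < n) (hm : m < n) :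
    v + k = v + m ↔ k = m := by
  rw [add_right_inj, ZMod.natCast_eq_natCast_iff', Nat.mod_eq_of_lt hk, Nat.mod_eq_of_lt hm]

def parentOffset (n k : ℕ) : ℕ :=
  if k % 3 = 0 then k + 1 else if k % 3 = 1 then n - 1 else 1

def linkParent (v u : ZMod n) : ZMod n := v + parentOffset n (u - v).val

lemma parentOffset_of_mod_three_eq_zero {k : ℕ} (h : k % 3 = 0) : parentOffset n k = k + 1 := by
  simp [parentOffset, h]

lemma parentOffset_of_mod_three_eq_one {k : ℕ} (h : k % 3 = 1) : parentOffset n k = n - 1 := by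
  simp [parentOffset, h]

lemma parentOffset_of_mod_three_eq_two {k : ℕ} (h : k % 3 = 2) : parentOffset n k = 1 := by
  simp [parentOffset, h]

lemma parentOffset_parentOffset (hn : n % 3 = 2) (k : ℕ) :
    parentOffset n (parentOffset n k) = n - 1 := by
  rcases (by omega : k % 3 = 0 ∨ k % 3 = 1 ∨ k % 3 = 2) with h | h | h
  · rw [parentOffset_of_mod_three_eq_zero h, parentOffset_of_mod_three_eq_one (by omega)]
  · rw [parentOffset_of_mod_three_eq_one h, parentOffset_of_mod_three_eq_one (by omega)]
  · rw [parentOffset_of_mod_three_eq_two h, parentOffset_of_mod_three_eq_one (by omega)]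

lemma parentOffset_lt (hn : n % 3 = 2) {k : ℕ} (hk : k < n) : parentOffset n k < n := by
  unfold parentOffset
  split_ifs <;> omega

lemma parentOffset_pos (hn : n % 3 = 2) (k : ℕ) : 0 < parentOffset n k := by
  unfold parentOffset
  split_ifs <;> omega

lemma parentOffset_ne {k : ℕ} (hk : k < n - 1) : parentOffset n k ≠ k := by
  unfold parentOffset
  split_ifs <;> omega

lemma linkParent_add_natCast (v : ZMod n) {k : ℕ} (hk : k < n) :
    linkParent v (v + k) = v + parentOffset n k := by
  simp [linkParent, ZMod.val_cast_of_lt hk]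

lemma add_natCast_pred (hn : 0 < n) (v : ZMod n) : v + ((n - 1 : ℕ) : ZMod n) = v - 1 := by
  rw [add_natCast_of_add_eq v (m := 1) (by omega), Nat.cast_one]

lemma linkParent_linkParent [NeZero n] (hn : n % 3 = 2) (v u : ZMod n) :
    linkParent v (linkParent v u) = v - 1 := by
  have hk := ZMod.val_lt (u - v)
  rw [show linkParent v u = v + parentOffset n (u - v).val from rfl,
    linkParent_add_natCast v (parentOffset_lt hn hk), parentOffset_parentOffset hn,
    add_natCast_pred (by omega)]

-- `T.erase v` is then the edge from `v + k` to its parent in the link of `v`.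
def IsOffsetTriangle (v : ZMod n) (T : Finset (ZMod n)) (k : ℕ) : Prop :=
  0 < k ∧ k < n - 1 ∧ T = {v, v + k, v + parentOffset n k}

namespace IsOffsetTriangle

variable {v : ZMod n} {T : Finset (ZMod n)} {k : ℕ}

lemma eq_insert (h : IsOffsetTriangle v T k) : T = {v, v + k, v + parentOffset n k} := h.2.2

lemma self_mem (h : IsOffsetTriangle v T k) : v ∈ T := h.eq_insert ▸ mem_insert_self _ _

lemma distinct (hn : n % 3 = 2) (h : IsOffsetTriangle v T k) :
    v ∉ ({v + k, v + parentOffset n k} : Finset (ZMod n)) ∧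
      (v + k : ZMod n) ≠ v + parentOffset n k := by
  obtain ⟨hk0, hk, -⟩ := h
  have hpk := parentOffset_lt hn (k := k) (by omega)
  simp only [mem_insert, mem_singleton, not_or]
  refine ⟨⟨self_ne_add_natCast v hk0 (by omega), self_ne_add_natCast v (parentOffset_pos hn k) hpk⟩,
    ?_⟩
  rw [Ne, add_natCast_inj v (by omega) hpk]
  exact (parentOffset_ne hk).symm

lemma card_eq (hn : n % 3 = 2) (h : IsOffsetTriangle v T k) : T.card = 3 := by
  obtain ⟨hv, hk⟩ := h.distinct hn
  rw [h.eq_insert, card_insert_of_notMem hv, card_pair hk]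

lemma erase_eq (hn : n % 3 = 2) (h : IsOffsetTriangle v T k) :
    T.erase v = {v + k, linkParent v (v + k)} := by
  rw [linkParent_add_natCast v (by have := h.2.1; omega), h.eq_insert,
    erase_insert (h.distinct hn).1]

lemma ne_root (hn : n % 3 = 2) (h : IsOffsetTriangle v T k) : (v + k : ZMod n) ≠ v - 1 := by
  rw [← add_natCast_pred (by omega), Ne, add_natCast_inj v (by have := h.2.1; omega) (by omega)]
  exact h.2.1.ne

end IsOffsetTriangle

-- The parent of `v + k`, unless it is the root, heads the edge of another triangle through `v`.
def IsLinkTriangle (𝒯 : Finset (Finset (ZMod n))) (v : ZMod n) (T : Finset (ZMod n)) : Prop :=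
  ∃ k, IsOffsetTriangle v T k ∧
    (parentOffset n k = n - 1 ∨ ∃ T' ∈ 𝒯, IsOffsetTriangle v T' (parentOffset n k))

theorem isRootedTree_linkEdges [NeZero n] (hn : n % 3 = 2) {𝒯 : Finset (Finset (ZMod n))}
    {v : ZMod n} (h𝒯 : ∀ T ∈ 𝒯, v ∈ T → IsLinkTriangle 𝒯 v T) :
    IsRootedTree (linkEdges 𝒯 v) (v - 1) (linkParent v) := by
  have hmem : ∀ T ∈ 𝒯, ∀ k, IsOffsetTriangle v T k →
      {v + k, linkParent v (v + k)} ∈ linkEdges 𝒯 v := fun T hT k hk =>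
    mem_image.2 ⟨T, mem_filter.2 ⟨hT, hk.self_mem⟩, hk.erase_eq hn⟩
  refine ⟨?_, ?_, ⟨2, linkParent_linkParent hn v⟩⟩
  · simp only [linkEdges, mem_image, mem_filter, forall_exists_index, and_imp]
    rintro _ T hT hvT rfl
    obtain ⟨k, hk, -⟩ := h𝒯 T hT hvT
    exact ⟨v + k, hk.ne_root hn, hk.erase_eq hn⟩
  · intro e he u hu hur
    obtain ⟨T, hT, rfl⟩ := mem_image.1 he
    obtain ⟨hT, hvT⟩ := mem_filter.1 hT
    obtain ⟨k, hk, hroot⟩ := h𝒯 T hT hvT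
    rw [hk.erase_eq hn, mem_insert, mem_singleton] at hu
    rcases hu with rfl | rfl
    · exact hmem T hT k hk
    · rw [linkParent_add_natCast v (by have := hk.2.1; omega)] at hur ⊢
      rcases hroot with hroot | ⟨T', hT', hk'⟩
      · exact absurd (by rw [hroot, add_natCast_pred (by omega)]) hur
      · exact hmem T' hT' _ hk'

end Offsets

section Labels

variable {n : ℕ} [NeZero n]

def iccRep (x : ZMod n) : ℕ := (x - 1).val + 1

lemma natCast_iccRep (x : ZMod n) : ((iccRep x : ℕ) : ZMod n) = x := by
  simp [iccRep]

lemma iccRep_injective : Function.Injective (iccRep (n := n)) :=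
  Function.LeftInverse.injective natCast_iccRep

lemma iccRep_mem_Icc (x : ZMod n) : iccRep x ∈ Icc 1 n := by
  have := ZMod.val_lt (x - 1)
  simp only [iccRep, mem_Icc]
  omega

lemma modRep_eq_iccRep (i : ℤ) : modRep n i = iccRep (i : ZMod n) := by
  have h : ((((i : ZMod n) - 1).val : ℕ) : ℤ) = (i - 1) % n := by
    rw [← ZMod.val_intCast]
    push_cast
    rfl
  rw [modRep, iccRep, ← h, Int.toNat_natCast]

end Labels

section Triangles

variable {n : ℕ}

def sigmaTriangle (a : ZMod n) : Finset (ZMod n) := {a, a + 1, a + 2}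

def deltaTriangle₁ (a : ZMod n) (j : ℕ) : Finset (ZMod n) := {a, a + 1, a + 2 + 3 * j}

def deltaTriangle₂ (a : ZMod n) (j : ℕ) : Finset (ZMod n) := {a + 1 + 3 * j, a + 2 + 3 * j, a + 1}

def triangles (p : ℕ) (S : Finset (ℕ × ℕ)) : Finset (Finset (ZMod (3 * p - 1))) :=
  (Icc 1 (3 * p - 1)).image (fun i : ℕ => sigmaTriangle (i : ZMod (3 * p - 1))) ∪
    S.biUnion fun q => {deltaTriangle₁ (q.1 : ZMod (3 * p - 1)) q.2,
      deltaTriangle₂ (q.1 : ZMod (3 * p - 1)) q.2}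

lemma sigmaA_union_biUnion_deltaA (p : ℕ) [NeZero (3 * p - 1)] (S : Finset (ℕ × ℕ)) :
    SigmaA p ∪ S.biUnion (fun q => DeltaA p q.1 q.2) =
      ((triangles p S).image (image iccRep)).biUnion powerset := by
  ext F
  simp [SigmaA, DeltaA, triangles, sigmaTriangle, deltaTriangle₁, deltaTriangle₂,
    modRep_eq_iccRep, or_and_right, exists_or, and_or_left, image_insert]

end Triangles

section LinkTriangles

variable {p : ℕ} {𝒯 : Finset (Finset (ZMod (3 * p - 1)))}

lemma isOffsetTriangle_sigmaTriangle_sub_one (hp : 2 ≤ p) (v : ZMod (3 * p - 1)) :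
    IsOffsetTriangle v (sigmaTriangle (v - 1)) 1 := by
  refine ⟨by omega, by omega, ?_⟩
  rw [parentOffset_of_mod_three_eq_one (by norm_num), add_natCast_pred (by omega), Nat.cast_one]
  ext x
  simp only [sigmaTriangle, mem_insert, mem_singleton, sub_add_cancel,
    show v - 1 + 2 = v + 1 by ring]
  tauto

lemma isLinkTriangle_sigmaTriangle (hp : 2 ≤ p) {a v : ZMod (3 * p - 1)}
    (hsigma : sigmaTriangle (v - 1) ∈ 𝒯) (hv : v ∈ sigmaTriangle a) :
    IsLinkTriangle 𝒯 v (sigmaTriangle a) := by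
  simp only [sigmaTriangle, mem_insert, mem_singleton] at hv
  rcases hv with rfl | rfl | rfl
  · refine ⟨2, ⟨by omega, by omega, ?_⟩, Or.inr ⟨_, hsigma, ?_⟩⟩ <;>
      rw [parentOffset_of_mod_three_eq_two (by norm_num)]
    · ext x
      simp only [sigmaTriangle, mem_insert, mem_singleton, Nat.cast_ofNat, Nat.cast_one]
      tauto
    · exact isOffsetTriangle_sigmaTriangle_sub_one hp _
  · refine ⟨1, ⟨by omega, by omega, ?_⟩, Or.inl (parentOffset_of_mod_three_eq_one (by norm_num))⟩
    rw [parentOffset_of_mod_three_eq_one (by norm_num), add_natCast_pred (by omega)]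
    ext x
    simp only [sigmaTriangle, mem_insert, mem_singleton, add_sub_cancel_right, Nat.cast_one,
      show a + 1 + 1 = a + 2 by ring]
    tauto
  · refine ⟨3 * p - 3, ⟨by omega, by omega, ?_⟩, Or.inl ?_⟩ <;>
      rw [parentOffset_of_mod_three_eq_zero (by omega)]
    · ext x
      simp only [sigmaTriangle, mem_insert, mem_singleton,
        add_natCast_of_add_eq _ (show 3 * p - 3 + 2 = 3 * p - 1 by omega),
        add_natCast_of_add_eq _ (show 3 * p - 3 + 1 + 1 = 3 * p - 1 by omega),
        Nat.cast_ofNat, Nat.cast_one, add_sub_cancel_right, show a + 2 - 1 = a + 1 by ring]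
      tauto
    · omega


lemma isLinkTriangle_deltaTriangle₁ (hp : 2 ≤ p) {a v : ZMod (3 * p - 1)} {j : ℕ}
    (hj : 1 ≤ j ∧ j ≤ p - 2) (hsigma : sigmaTriangle (v - 1) ∈ 𝒯)
    (hcomp : deltaTriangle₂ a j ∈ 𝒯) (hv : v ∈ deltaTriangle₁ a j) :
    IsLinkTriangle 𝒯 v (deltaTriangle₁ a j) := by
  simp only [deltaTriangle₁, mem_insert, mem_singleton] at hv
  rcases hv with rfl | rfl | rfl
  · refine ⟨2 + 3 * j, ⟨by omega, by omega, ?_⟩, Or.inr ⟨_, hsigma, ?_⟩⟩ <;>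
      rw [parentOffset_of_mod_three_eq_two (by omega)]
    · ext x
      simp only [deltaTriangle₁, mem_insert, mem_singleton, Nat.cast_one,
        show v + ((2 + 3 * j : ℕ) : ZMod (3 * p - 1)) = v + 2 + 3 * j by push_cast; ring]
      tauto
    · exact isOffsetTriangle_sigmaTriangle_sub_one hp _
  · refine ⟨1 + 3 * j, ⟨by omega, by omega, ?_⟩,
      Or.inl (parentOffset_of_mod_three_eq_one (by omega))⟩
    rw [parentOffset_of_mod_three_eq_one (by omega), add_natCast_pred (by omega)]
    ext x
    simp only [deltaTriangle₁, mem_insert, mem_singleton, add_sub_cancel_right,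
      show a + 1 + ((1 + 3 * j : ℕ) : ZMod (3 * p - 1)) = a + 2 + 3 * j by push_cast; ring]
    tauto
  · have hk : 3 * p - 3 - 3 * j + 1 = 3 * p - 2 - 3 * j := by omega
    have e₁ : a + 2 + 3 * j + ((3 * p - 3 - 3 * j : ℕ) : ZMod (3 * p - 1)) = a := by
      rw [add_natCast_of_add_eq _ (m := 2 + 3 * j) (by omega)]
      push_cast
      ring
    have e₂ : a + 2 + 3 * j + ((3 * p - 2 - 3 * j : ℕ) : ZMod (3 * p - 1)) = a + 1 := by
      rw [add_natCast_of_add_eq _ (m := 1 + 3 * j) (by omega)]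
      push_cast
      ring
    refine ⟨3 * p - 3 - 3 * j, ⟨by omega, by omega, ?_⟩, Or.inr ⟨_, hcomp, ?_⟩⟩ <;>
      rw [parentOffset_of_mod_three_eq_zero (by omega), hk]
    · ext x
      simp only [deltaTriangle₁, mem_insert, mem_singleton, e₁, e₂]
      tauto
    · refine ⟨by omega, by omega, ?_⟩
      rw [parentOffset_of_mod_three_eq_one (by omega), add_natCast_pred (by omega)]
      ext x
      simp only [deltaTriangle₂, mem_insert, mem_singleton, e₂,
        show a + 2 + 3 * j - 1 = a + 1 + 3 * j by ring]
      tauto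

lemma isLinkTriangle_deltaTriangle₂ (hp : 2 ≤ p) {a v : ZMod (3 * p - 1)} {j : ℕ}
    (hj : 1 ≤ j ∧ j ≤ p - 2) (hsigma : sigmaTriangle (v - 1) ∈ 𝒯)
    (hcomp : deltaTriangle₁ a j ∈ 𝒯) (hv : v ∈ deltaTriangle₂ a j) :
    IsLinkTriangle 𝒯 v (deltaTriangle₂ a j) := by
  simp only [deltaTriangle₂, mem_insert, mem_singleton] at hv
  rcases hv with rfl | rfl | rfl
  · refine ⟨3 * p - 1 - 3 * j, ⟨by omega, by omega, ?_⟩, Or.inr ⟨_, hsigma, ?_⟩⟩ <;>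
      rw [parentOffset_of_mod_three_eq_two (by omega)]
    · ext x
      simp only [deltaTriangle₂, mem_insert, mem_singleton, Nat.cast_one,
        add_natCast_of_add_eq _ (show 3 * p - 1 - 3 * j + 3 * j = 3 * p - 1 by omega),
        show a + 1 + 3 * j - ((3 * j : ℕ) : ZMod (3 * p - 1)) = a + 1 by push_cast; ring,
        show a + 1 + 3 * j + 1 = a + 2 + 3 * j by ring]
      tauto
    · exact isOffsetTriangle_sigmaTriangle_sub_one hp _
  · refine ⟨3 * p - 2 - 3 * j, ⟨by omega, by omega, ?_⟩,
      Or.inl (parentOffset_of_mod_three_eq_one (by omega))⟩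
    rw [parentOffset_of_mod_three_eq_one (by omega), add_natCast_pred (by omega)]
    ext x
    simp only [deltaTriangle₂, mem_insert, mem_singleton,
      add_natCast_of_add_eq _ (show 3 * p - 2 - 3 * j + (1 + 3 * j) = 3 * p - 1 by omega),
      show a + 2 + 3 * j - ((1 + 3 * j : ℕ) : ZMod (3 * p - 1)) = a + 1 by push_cast; ring,
      show a + 2 + 3 * j - 1 = a + 1 + 3 * j by ring]
    tauto
  · have e : a + 1 + ((3 * j + 1 : ℕ) : ZMod (3 * p - 1)) = a + 2 + 3 * j := by
      push_cast
      ring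
    refine ⟨3 * j, ⟨by omega, by omega, ?_⟩, Or.inr ⟨_, hcomp, ?_⟩⟩ <;>
      rw [parentOffset_of_mod_three_eq_zero (by omega)]
    · ext x
      simp only [deltaTriangle₂, mem_insert, mem_singleton, e,
        show a + 1 + ((3 * j : ℕ) : ZMod (3 * p - 1)) = a + 1 + 3 * j by push_cast; ring]
      tauto
    · refine ⟨by omega, by omega, ?_⟩
      rw [parentOffset_of_mod_three_eq_one (by omega), add_natCast_pred (by omega)]
      ext x
      simp only [deltaTriangle₁, mem_insert, mem_singleton, e, add_sub_cancel_right]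
      tauto

end LinkTriangles

section Complex

variable {p : ℕ} {S : Finset (ℕ × ℕ)}

lemma sigmaTriangle_mem_triangles (x : ZMod (3 * p - 1)) [NeZero (3 * p - 1)] :
    sigmaTriangle x ∈ triangles p S :=
  mem_union_left _ (mem_image.2 ⟨iccRep x, iccRep_mem_Icc x, by rw [natCast_iccRep]⟩)

lemma isLinkTriangle_of_mem_triangles [NeZero (3 * p - 1)] (hp : 2 ≤ p)
    (hS : S ⊆ Icc 1 (3 * p - 1) ×ˢ Icc 1 (p - 2)) {T : Finset (ZMod (3 * p - 1))}
    {v : ZMod (3 * p - 1)} (hT : T ∈ triangles p S) (hv : v ∈ T) :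
    IsLinkTriangle (triangles p S) v T := by
  have hsigma := sigmaTriangle_mem_triangles (S := S) (v - 1)
  rcases mem_union.1 hT with h | h
  · obtain ⟨i, -, rfl⟩ := mem_image.1 h
    exact isLinkTriangle_sigmaTriangle hp hsigma hv
  · obtain ⟨q, hq, hTq⟩ := mem_biUnion.1 h
    have hj : 1 ≤ q.2 ∧ q.2 ≤ p - 2 := by
      have := mem_product.1 (hS hq)
      simp only [mem_Icc] at this
      omega
    have hδ : ∀ T' ∈ ({deltaTriangle₁ (q.1 : ZMod (3 * p - 1)) q.2,
        deltaTriangle₂ (q.1 : ZMod (3 * p - 1)) q.2} : Finset _), T' ∈ triangles p S :=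
      fun T' hT' => mem_union_right _ (mem_biUnion.2 ⟨q, hq, hT'⟩)
    rcases mem_insert.1 hTq with rfl | hTq
    · exact isLinkTriangle_deltaTriangle₁ hp hj hsigma (hδ _ (by simp)) hv
    · rw [mem_singleton.1 hTq] at hv ⊢
      exact isLinkTriangle_deltaTriangle₂ hp hj hsigma (hδ _ (by simp)) hv

lemma card_of_mem_triangles [NeZero (3 * p - 1)] (hp : 2 ≤ p)
    (hS : S ⊆ Icc 1 (3 * p - 1) ×ˢ Icc 1 (p - 2)) {T : Finset (ZMod (3 * p - 1))}
    (hT : T ∈ triangles p S) : T.card = 3 := by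
  obtain ⟨v, hv⟩ : T.Nonempty := by
    simp only [triangles, mem_union, mem_image, mem_biUnion, mem_insert, mem_singleton] at hT
    rcases hT with ⟨i, -, rfl⟩ | ⟨q, -, rfl | rfl⟩ <;> exact insert_nonempty _ _
  obtain ⟨k, hk, -⟩ := isLinkTriangle_of_mem_triangles hp hS hT hv
  exact hk.card_eq (by omega)

theorem exists_isRootedTree_link [NeZero (3 * p - 1)] (hp : 2 ≤ p)
    (hS : S ⊆ Icc 1 (3 * p - 1) ×ˢ Icc 1 (p - 2)) {w : ℕ}
    (hw : {w} ∈ ((triangles p S).image (image iccRep)).biUnion powerset) :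
    ∃ (E : Finset (Finset ℕ)) (r : ℕ) (P : ℕ → ℕ), IsRootedTree E r P ∧ E.Nonempty ∧
      link (((triangles p S).image (image iccRep)).biUnion powerset) {w} = E.biUnion powerset := by
  obtain ⟨v, rfl⟩ : ∃ v, iccRep v = w := by
    simp only [mem_biUnion, mem_image, mem_powerset, singleton_subset_iff] at hw
    obtain ⟨_, ⟨T, -, rfl⟩, hwT⟩ := hw
    obtain ⟨v, -, hv⟩ := mem_image.1 hwT
    exact ⟨v, hv⟩
  have hT := isRootedTree_linkEdges (v := v) (by omega) fun T hT hv =>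
    isLinkTriangle_of_mem_triangles hp hS hT hv
  refine ⟨_, _, _, hT.image natCast_iccRep, ?_, ?_⟩
  · have hv : v ∈ sigmaTriangle (v - 1) := by simp [sigmaTriangle]
    exact Nonempty.image
      ⟨_, mem_image.2 ⟨_, mem_filter.2 ⟨sigmaTriangle_mem_triangles (v - 1), hv⟩, rfl⟩⟩ _
  · rw [link_biUnion_powerset_singleton, linkEdges_image iccRep_injective]

end Complex

/-- **Lemma 3.2(ii).** For `n = 3p-1` and any subcollection `M ⊆ L` of the `Δ(i,j)`,
`Σ ∪ ⋃_{Δ(i,j) ∈ M} Δ(i,j)` is Buchsbaum and link-acyclic. -/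
theorem stmt13 (K : Type) [Field K] (p : ℕ) (hp : 2 ≤ p)
    (S : Finset (ℕ × ℕ))
    (hS : S ⊆ (Finset.Icc 1 (3 * p - 1)) ×ˢ (Finset.Icc 1 (p - 2))) :
    IsBuchsbaum K (SigmaA p ∪ S.biUnion fun q => DeltaA p q.1 q.2) ∧
      IsLinkAcyclic K (SigmaA p ∪ S.biUnion fun q => DeltaA p q.1 q.2) := by
  have : NeZero (3 * p - 1) := ⟨by omega⟩
  rw [sigmaA_union_biUnion_deltaA]
  refine ⟨⟨isPure_biUnion_powerset (d := 3) fun T hT => ?_, fun w hw => ?_⟩, fun w hw i => ?_⟩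
  · obtain ⟨T₀, hT₀, rfl⟩ := mem_image.1 hT
    rw [card_image_of_injective _ iccRep_injective, card_of_mem_triangles hp hS hT₀]
  · obtain ⟨E, r, P, hT, hE, hlink⟩ := exists_isRootedTree_link hp hS hw
    rw [hlink]
    exact hT.isCohenMacaulay hE
  · obtain ⟨E, r, P, hT, hE, hlink⟩ := exists_isRootedTree_link hp hS hw
    rw [hlink]
    exact hT.betti_eq_zero hE i
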